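/- Assume u_n = v_n = 1 for all n and κ_n^{2p} ≠ −1. For each n ∈ {1,…,N} let M^{(n)}(λ) := L_{n−1}(λ)⋯L_1(λ)·L_N(λ)⋯L_n(λ) be the cyclically reordered monodromy matrix, with entries A^{(n)}(λ), B^{(n)}(λ), C^{(n)}(λ), D^{(n)}(λ) (so M^{(1)} = M), set μ_{n,±} := iκ_n^{±1}q^{1/2}ξ_n, and let α_{0,n} := (q^{−1}𝗏_n² + κ_n²)·(q^{−1}𝗏_n²κ_n² + 1)^{−1}·𝗎_n^{−1} (the inverse existing since κ_n^{2p} ≠ −1). Then the local operators are reconstructed from the Yang–Baxter generators: A^{(n)}(μ_{n,+}) = B^{(n)}(μ_{n,+})·𝗎_n, C^{(n)}(μ_{n,+}) = D^{(n)}(μ_{n,+})·𝗎_n, B^{(n)}(μ_{n,−}) = A^{(n)}(μ_{n,−})·α_{0,n}, and D^{(n)}(μ_{n,−}) = C^{(n)}(μ_{n,−})·α_{0,n}. -/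

import Mathlib

/-!
`M^{(n)}(λ)` has `L_n(λ)` as its rightmost factor, so any relation "column `j` = column `k` times
`X`" satisfied by `L_n(λ)` is inherited by `M^{(n)}(λ)`. For `L_n` these relations are identities
in any algebra generated by a Weyl pair `𝗎𝗏 = q𝗏𝗎`: at `λ_n = iκ_n q^{1/2}` the first column is
the second times `𝗎_n`, and at `λ_n = iκ_n^{-1} q^{1/2}` the second column times
`𝗎_n (q^{-1}κ_n²𝗏_n² + 1)` is the first column times `q^{-1}𝗏_n² + κ_n²`, an identity free of
inverses. The operator `q^{-1}κ_n²𝗏_n² + 1` is diagonal, and an eigenvalue `q^{-1}κ_n²q^{2k} + 1`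
can only vanish if `κ_n^{2p} = (-q)^p = -1`.
-/

open Matrix Complex Filter Topology

namespace SG

/-- Index set for the basis of `(ℂ^p)^{⊗N}`. -/
abbrev Idx (p N : ℕ) := Fin N → ZMod p

/-- Operators on `(ℂ^p)^{⊗N}`, realized as matrices. -/
abbrev Op (p N : ℕ) := Matrix (Idx p N) (Idx p N) ℂ

/-- The square root of `q`: `q^{1/2} := q^{(p+1)/2}`. -/
noncomputable def qh (p : ℕ) (q : ℂ) : ℂ := q ^ ((p + 1) / 2)

/-- The operator `𝗎_n = u_n · (shift at site n)`, `𝗎_n|k⟩ = u_n |k-1⟩`. -/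
noncomputable def uop (p N : ℕ) (u : Fin N → ℂ) (n : Fin N) : Op p N :=
  Matrix.of fun f g => if f = Function.update g n (g n - 1) then u n else 0

/-- The inverse of `𝗎_n`. -/
noncomputable def uopInv (p N : ℕ) (u : Fin N → ℂ) (n : Fin N) : Op p N :=
  Matrix.of fun f g => if f = Function.update g n (g n + 1) then (u n)⁻¹ else 0

/-- The operator `𝗏_n = v_n · (clock at site n)`, `𝗏_n|k⟩ = v_n q^k |k⟩`. -/
noncomputable def vop (p N : ℕ) (q : ℂ) (v : Fin N → ℂ) (n : Fin N) : Op p N :=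
  Matrix.diagonal fun g => v n * q ^ (g n).val

/-- The inverse of `𝗏_n`. -/
noncomputable def vopInv (p N : ℕ) (q : ℂ) (v : Fin N → ℂ) (n : Fin N) : Op p N :=
  Matrix.diagonal fun g => (v n * q ^ (g n).val)⁻¹

/-- The Lax matrix `L_n(λ)`. -/
noncomputable def Lax (p N : ℕ) [NeZero p] (q : ℂ) (κ ξ u v : Fin N → ℂ) (n : Fin N)
    (lam : ℂ) : Matrix (Fin 2) (Fin 2) (Op p N) :=
  !![κ n • (uop p N u n *
        ((qh p q)⁻¹ • (κ n • vop p N q v n) + qh p q • ((κ n)⁻¹ • vopInv p N q v n))),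
     (κ n / Complex.I) • ((lam / ξ n) • vop p N q v n - (lam / ξ n)⁻¹ • vopInv p N q v n);
     (κ n / Complex.I) • ((lam / ξ n) • vopInv p N q v n - (lam / ξ n)⁻¹ • vop p N q v n),
     κ n • (uopInv p N u n *
        (qh p q • ((κ n)⁻¹ • vop p N q v n) + (qh p q)⁻¹ • (κ n • vopInv p N q v n)))]

/-- The monodromy matrix `M(λ) = L_N(λ) ⋯ L_1(λ)`. -/
noncomputable def Mon (p N : ℕ) [NeZero p] (q : ℂ) (κ ξ u v : Fin N → ℂ) (lam : ℂ) :
    Matrix (Fin 2) (Fin 2) (Op p N) :=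
  (((List.finRange N).map fun n => Lax p N q κ ξ u v n lam).reverse).prod

/-- `A(λ)`, the (1,1) entry of the monodromy matrix. -/
noncomputable def Amat (p N : ℕ) [NeZero p] (q : ℂ) (κ ξ u v : Fin N → ℂ) (lam : ℂ) :
    Op p N := Mon p N q κ ξ u v lam 0 0

/-- `B(λ)`, the (1,2) entry of the monodromy matrix. -/
noncomputable def Bmat (p N : ℕ) [NeZero p] (q : ℂ) (κ ξ u v : Fin N → ℂ) (lam : ℂ) :
    Op p N := Mon p N q κ ξ u v lam 0 1

/-- `C(λ)`, the (2,1) entry of the monodromy matrix. -/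
noncomputable def Cmat (p N : ℕ) [NeZero p] (q : ℂ) (κ ξ u v : Fin N → ℂ) (lam : ℂ) :
    Op p N := Mon p N q κ ξ u v lam 1 0

/-- `D(λ)`, the (2,2) entry of the monodromy matrix. -/
noncomputable def Dmat (p N : ℕ) [NeZero p] (q : ℂ) (κ ξ u v : Fin N → ℂ) (lam : ℂ) :
    Op p N := Mon p N q κ ξ u v lam 1 1

/-- The transfer matrix `T(λ) = A(λ) + D(λ)`. -/
noncomputable def Tmat (p N : ℕ) [NeZero p] (q : ℂ) (κ ξ u v : Fin N → ℂ) (lam : ℂ) :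
    Op p N := Amat p N q κ ξ u v lam + Dmat p N q κ ξ u v lam

/-- The grading charge `Θ = ∏_{n=1}^N 𝗏_n^{(-1)^n}` (sites `n : Fin N` correspond to
the 1-indexed site `n+1`, whence the exponent `(-1)^{n+1}`); it is a diagonal operator. -/
noncomputable def Theta (p N : ℕ) (q : ℂ) (v : Fin N → ℂ) : Op p N :=
  Matrix.diagonal fun g => ∏ n : Fin N, (v n * q ^ (g n).val) ^ ((-1 : ℤ) ^ ((n : ℕ) + 1))

/-- The inverse `Θ^{-1}` of the grading charge. -/
noncomputable def ThetaInv (p N : ℕ) (q : ℂ) (v : Fin N → ℂ) : Op p N :=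
  Matrix.diagonal fun g => ∏ n : Fin N, (v n * q ^ (g n).val) ^ ((-1 : ℤ) ^ (n : ℕ))

/-- The average `𝒪(λ) = ∏_{k=1}^p O(q^k λ)` of a commuting family `O`. -/
noncomputable def avg (p N : ℕ) [NeZero p] (q : ℂ) (O : ℂ → Op p N) (lam : ℂ) : Op p N :=
  ((List.range p).map fun k => O (q ^ (k + 1) * lam)).prod

/-- The cyclically reordered monodromy matrix
`M^{(n)}(λ) = L_{n-1}(λ)⋯L_1(λ)·L_N(λ)⋯L_n(λ)` (site `n : Fin N` is the 1-indexed
site `n+1`, so `MonCyc` at `n = 0` is `M` itself). -/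
noncomputable def MonCyc (p N : ℕ) [NeZero p] (q : ℂ) (κ ξ u v : Fin N → ℂ) (n : Fin N)
    (lam : ℂ) : Matrix (Fin 2) (Fin 2) (Op p N) :=
  ((((List.finRange N).rotate (n : ℕ)).map fun m => Lax p N q κ ξ u v m lam).reverse).prod

/-- The local operator `α_{0,n} = (q^{-1}𝗏_n² + κ_n²)(q^{-1}𝗏_n²κ_n² + 1)^{-1}𝗎_n^{-1}`. -/
noncomputable def alpha0 (p N : ℕ) [NeZero p] (q : ℂ) (κ u v : Fin N → ℂ) (n : Fin N) :
    Op p N :=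
  (q⁻¹ • vop p N q v n ^ 2 + (κ n ^ 2) • (1 : Op p N)) *
    ((q⁻¹ * κ n ^ 2) • vop p N q v n ^ 2 + 1)⁻¹ * uopInv p N u n

end SG

section WeylPair

variable {A : Type*} [Ring A] [Algebra ℂ A]

def IsWeylPair (q : ℂ) (U V : Aˣ) : Prop := (U : A) * V = q • ((V : A) * U)

variable {q : ℂ} {U V : Aˣ}

namespace IsWeylPair

lemma snd_mul_fst (h : IsWeylPair q U V) (hq : q ≠ 0) : (V : A) * U = q⁻¹ • ((U : A) * V) := by
  rw [h, smul_smul, inv_mul_cancel₀ hq, one_smul]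

lemma snd_inv_mul_fst (h : IsWeylPair q U V) : (↑V⁻¹ : A) * U = q • ((U : A) * ↑V⁻¹) :=
  calc (↑V⁻¹ : A) * U = ↑V⁻¹ * (U * V) * ↑V⁻¹ := by simp [mul_assoc]
    _ = q • ((U : A) * ↑V⁻¹) := by rw [h, mul_smul_comm, smul_mul_assoc]; simp

lemma snd_mul_fst_mul (h : IsWeylPair q U V) (hq : q ≠ 0) (x : A) :
    (V : A) * (U * x) = q⁻¹ • ((U : A) * (V * x)) := by
  rw [← mul_assoc, h.snd_mul_fst hq, smul_mul_assoc, mul_assoc]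

lemma snd_inv_mul_fst_mul (h : IsWeylPair q U V) (x : A) :
    (↑V⁻¹ : A) * (U * x) = q • ((U : A) * (↑V⁻¹ * x)) := by
  rw [← mul_assoc, h.snd_inv_mul_fst, smul_mul_assoc, mul_assoc]

end IsWeylPair

/-- `SG.Lax` with the shift and clock matrices replaced by an arbitrary Weyl pair `(U, V)`;
`s` plays the role of `q^{1/2}` and `l` that of `λ / ξ_n`. -/
noncomputable def laxMatrix (κ s l : ℂ) (U V : Aˣ) : Matrix (Fin 2) (Fin 2) A :=
  !![κ • ((U : A) * (s⁻¹ • (κ • (V : A)) + s • (κ⁻¹ • (↑V⁻¹ : A)))),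
     (κ / I) • (l • (V : A) - l⁻¹ • (↑V⁻¹ : A));
     (κ / I) • (l • (↑V⁻¹ : A) - l⁻¹ • (V : A)),
     κ • ((↑U⁻¹ : A) * (s • (κ⁻¹ • (V : A)) + s⁻¹ • (κ • (↑V⁻¹ : A))))]

variable {κ s : ℂ}

-- Both sides are normalised to combinations of words `U^{±1} V^k`; `match_scalars` then
-- compares coefficients, which are rational functions of `κ`, `s` and `i`.
lemma laxMatrix_apply_zero_eq_apply_one_mul (h : IsWeylPair q U V) (hs : s ^ 2 = q)
    (hs0 : s ≠ 0) (hκ : κ ≠ 0) (i : Fin 2) :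
    laxMatrix κ s (I * κ * s) U V i 0 = laxMatrix κ s (I * κ * s) U V i 1 * U := by
  subst hs
  have hq : s ^ 2 ≠ 0 := pow_ne_zero 2 hs0
  fin_cases i
  · simp only [laxMatrix, Matrix.of_apply, Matrix.cons_val', Matrix.cons_val_zero,
      Matrix.cons_val_one, Matrix.empty_val', Matrix.cons_val_fin_one, Fin.zero_eta,
      mul_add, sub_mul, smul_add, smul_sub, mul_smul_comm, smul_mul_assoc, smul_smul,
      h.snd_mul_fst hq, h.snd_inv_mul_fst]
    match_scalars <;> grind [I_sq]
  · simp only [laxMatrix, Matrix.of_apply, Matrix.cons_val', Matrix.cons_val_zero,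
      Matrix.cons_val_one, Matrix.empty_val', Matrix.cons_val_fin_one, Fin.mk_one,
      mul_add, add_mul, smul_add, smul_sub, mul_smul_comm, smul_mul_assoc, smul_smul, mul_assoc,
      h.snd_mul_fst hq, h.snd_inv_mul_fst, Units.inv_mul_cancel_left]
    match_scalars <;> grind [I_sq]

lemma laxMatrix_apply_one_eq_apply_zero_mul (h : IsWeylPair q U V) (hs : s ^ 2 = q)
    (hs0 : s ≠ 0) (hκ : κ ≠ 0) (W : Aˣ) (hW : (W : A) = (q⁻¹ * κ ^ 2) • (V : A) ^ 2 + 1)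
    (i : Fin 2) :
    laxMatrix κ s (I * κ⁻¹ * s) U V i 1 =
      laxMatrix κ s (I * κ⁻¹ * s) U V i 0 * ((q⁻¹ • (V : A) ^ 2 + κ ^ 2 • 1) * ↑W⁻¹ * ↑U⁻¹) := by
  rw [← mul_assoc, ← mul_assoc, Units.eq_mul_inv_iff_mul_eq, Units.eq_mul_inv_iff_mul_eq, hW]
  subst hs
  have hq : s ^ 2 ≠ 0 := pow_ne_zero 2 hs0
  fin_cases i
  · simp only [laxMatrix, Matrix.of_apply, Matrix.cons_val', Matrix.cons_val_zero,
      Matrix.cons_val_one, Matrix.empty_val', Matrix.cons_val_fin_one, Fin.zero_eta, sq,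
      mul_add, add_mul, sub_mul, smul_add, smul_sub, mul_smul_comm, smul_mul_assoc, smul_smul,
      mul_assoc, mul_one, h.snd_mul_fst hq, h.snd_inv_mul_fst, Units.inv_mul_cancel_left]
    match_scalars <;> grind [I_sq]
  · simp only [laxMatrix, Matrix.of_apply, Matrix.cons_val', Matrix.cons_val_zero,
      Matrix.cons_val_one, Matrix.empty_val', Matrix.cons_val_fin_one, Fin.mk_one, sq,
      mul_add, add_mul, sub_mul, smul_add, smul_sub, mul_smul_comm, smul_mul_assoc, smul_smul,
      mul_assoc, mul_one, h.snd_mul_fst hq, h.snd_inv_mul_fst, Units.inv_mul_cancel_left]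
    match_scalars <;> grind [I_sq]

end WeylPair

lemma Matrix.mul_apply_eq_mul_apply_mul {l m n α : Type*} [Fintype m] [Semiring α]
    (P : Matrix l m α) (L : Matrix m n α) {j k : n} {X : α} (h : ∀ i, L i j = L i k * X)
    (i : l) : (P * L) i j = (P * L) i k * X := by
  simp only [Matrix.mul_apply, h, Finset.sum_mul, mul_assoc]

lemma pow_zmod_val_add_one {p : ℕ} [NeZero p] {q : ℂ} (hq : q ^ p = 1) (a : ZMod p) :
    q ^ (a + 1).val = q ^ a.val * q := by
  rw [ZMod.val_add, ← pow_eq_pow_mod _ hq, pow_add, ZMod.val_one_eq_one_mod,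
    ← pow_eq_pow_mod _ hq, pow_one]

lemma inv_mul_add_one_ne_zero {p : ℕ} {q x : ℂ} (hp : Odd p) (hq : q ^ p = 1)
    (hx : x ^ p ≠ -1) : q⁻¹ * x + 1 ≠ 0 := by
  have hq0 : q ≠ 0 := by rintro rfl; simp [hp.pos.ne'] at hq
  intro h
  apply hx
  rw [show x = -q by field_simp at h; linear_combination h, hp.neg_pow, hq]

namespace SG

variable {p N : ℕ} [NeZero p]

lemma qh_sq {q : ℂ} (hp : Odd p) (hq : q ^ p = 1) : qh p q ^ 2 = q := by
  obtain ⟨m, rfl⟩ := hp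
  rw [qh, ← pow_mul, show (2 * m + 1 + 1) / 2 * 2 = (2 * m + 1) + 1 by omega, pow_succ, hq,
    one_mul]

lemma uop_mul_uopInv {u : Fin N → ℂ} {n : Fin N} (hu : u n ≠ 0) :
    uop p N u n * uopInv p N u n = 1 := by
  ext f g
  simp [uop, uopInv, Matrix.mul_apply, Matrix.one_apply, hu]

lemma uopInv_mul_uop {u : Fin N → ℂ} {n : Fin N} (hu : u n ≠ 0) :
    uopInv p N u n * uop p N u n = 1 := by
  ext f g
  simp [uop, uopInv, Matrix.mul_apply, Matrix.one_apply, hu]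

lemma vop_mul_vopInv {q : ℂ} (hq : q ≠ 0) {v : Fin N → ℂ} {n : Fin N} (hv : v n ≠ 0) :
    vop p N q v n * vopInv p N q v n = 1 := by
  rw [vop, vopInv, Matrix.diagonal_mul_diagonal, ← Matrix.diagonal_one]
  exact congrArg _ (funext fun g => mul_inv_cancel₀ (mul_ne_zero hv (pow_ne_zero _ hq)))

lemma vopInv_mul_vop {q : ℂ} (hq : q ≠ 0) {v : Fin N → ℂ} {n : Fin N} (hv : v n ≠ 0) :
    vopInv p N q v n * vop p N q v n = 1 := by
  rw [vop, vopInv, Matrix.diagonal_mul_diagonal, ← Matrix.diagonal_one]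
  exact congrArg _ (funext fun g => inv_mul_cancel₀ (mul_ne_zero hv (pow_ne_zero _ hq)))

lemma uop_mul_vop {q : ℂ} (hq : q ^ p = 1) (u v : Fin N → ℂ) (n : Fin N) :
    uop p N u n * vop p N q v n = q • (vop p N q v n * uop p N u n) := by
  ext f g
  simp only [uop, vop, Matrix.mul_diagonal, Matrix.diagonal_mul, Matrix.smul_apply,
    Matrix.of_apply, smul_eq_mul]
  split_ifs with h
  · have hshift := pow_zmod_val_add_one hq (g n - 1)
    rw [sub_add_cancel] at hshift
    rw [h, Function.update_self, hshift]
    ring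
  · simp

noncomputable def uopUnit {u : Fin N → ℂ} {n : Fin N} (hu : u n ≠ 0) : (Op p N)ˣ :=
  ⟨uop p N u n, uopInv p N u n, uop_mul_uopInv hu, uopInv_mul_uop hu⟩

noncomputable def vopUnit {q : ℂ} (hq : q ≠ 0) {v : Fin N → ℂ} {n : Fin N} (hv : v n ≠ 0) :
    (Op p N)ˣ :=
  ⟨vop p N q v n, vopInv p N q v n, vop_mul_vopInv hq hv, vopInv_mul_vop hq hv⟩

lemma isWeylPair_uopUnit_vopUnit {q : ℂ} (hq : q ^ p = 1) (hq0 : q ≠ 0) {u v : Fin N → ℂ}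
    {n : Fin N} (hu : u n ≠ 0) (hv : v n ≠ 0) :
    IsWeylPair q (uopUnit (p := p) hu) (vopUnit hq0 hv) :=
  uop_mul_vop hq u v n

lemma lax_eq_laxMatrix {q : ℂ} (hq : q ≠ 0) {κ ξ u v : Fin N → ℂ} {n : Fin N}
    (hu : u n ≠ 0) (hv : v n ≠ 0) (lam : ℂ) :
    Lax p N q κ ξ u v n lam =
      laxMatrix (κ n) (qh p q) (lam / ξ n) (uopUnit hu) (vopUnit hq hv) :=
  rfl

lemma isUnit_smul_vop_sq_add_one {q : ℂ} (hp : Odd p) (hq : q ^ p = 1) (c : ℂ)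
    {v : Fin N → ℂ} {n : Fin N} (hcv : (c * v n) ^ (2 * p) ≠ -1) :
    IsUnit ((q⁻¹ * c ^ 2) • vop p N q v n ^ 2 + (1 : Op p N)) := by
  rw [vop, Matrix.diagonal_pow, ← Matrix.diagonal_one, ← Matrix.diagonal_smul,
    Matrix.diagonal_add, Matrix.isUnit_diagonal, Pi.isUnit_iff]
  intro g
  have hpow : (c ^ 2 * (v n * q ^ (g n).val) ^ 2) ^ p = (c * v n) ^ (2 * p) := by
    calc (c ^ 2 * (v n * q ^ (g n).val) ^ 2) ^ p
        = (c * v n) ^ (2 * p) * (q ^ p) ^ (2 * (g n).val) := by ring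
      _ = (c * v n) ^ (2 * p) := by rw [hq, one_pow, mul_one]
  refine isUnit_iff_ne_zero.mpr ?_
  simpa [mul_assoc] using inv_mul_add_one_ne_zero hp hq (hpow ▸ hcv)

lemma monCyc_apply_eq_of_lax {q : ℂ} {κ ξ u v : Fin N → ℂ} {n : Fin N} {lam : ℂ} {j k : Fin 2}
    {X : Op p N} (h : ∀ i, Lax p N q κ ξ u v n lam i j = Lax p N q κ ξ u v n lam i k * X)
    (i : Fin 2) : MonCyc p N q κ ξ u v n lam i j = MonCyc p N q κ ξ u v n lam i k * X := by
  have hn : (n : ℕ) < (List.finRange N).length := by simp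
  rw [MonCyc, List.rotate_eq_drop_append_take hn.le, List.drop_eq_getElem_cons hn]
  simp only [List.getElem_finRange, Fin.cast_mk, Fin.eta, List.cons_append, List.map_cons,
    List.map_append, List.map_drop, List.map_take, List.reverse_cons, List.reverse_append,
    List.prod_append, List.prod_cons, List.prod_nil, mul_one]
  exact Matrix.mul_apply_eq_mul_apply_mul _ _ h i

theorem statement10_general (p N : ℕ) [NeZero p] (hp : Odd p)
    (q : ℂ) (hq : IsPrimitiveRoot q p)
    (κ ξ u v : Fin N → ℂ) (hκ : ∀ n, κ n ≠ 0) (hξ : ∀ n, ξ n ≠ 0)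
    (hu : ∀ n, u n = 1) (hv : ∀ n, v n = 1)
    (hκp : ∀ n, κ n ^ (2 * p) ≠ -1) :
    ∀ n : Fin N,
      IsUnit ((q⁻¹ * κ n ^ 2) • vop p N q v n ^ 2 + (1 : Op p N)) ∧
      MonCyc p N q κ ξ u v n (Complex.I * κ n * qh p q * ξ n) 0 0 =
        MonCyc p N q κ ξ u v n (Complex.I * κ n * qh p q * ξ n) 0 1 * uop p N u n ∧
      MonCyc p N q κ ξ u v n (Complex.I * κ n * qh p q * ξ n) 1 0 =
        MonCyc p N q κ ξ u v n (Complex.I * κ n * qh p q * ξ n) 1 1 * uop p N u n ∧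
      MonCyc p N q κ ξ u v n (Complex.I * (κ n)⁻¹ * qh p q * ξ n) 0 1 =
        MonCyc p N q κ ξ u v n (Complex.I * (κ n)⁻¹ * qh p q * ξ n) 0 0 *
          alpha0 p N q κ u v n ∧
      MonCyc p N q κ ξ u v n (Complex.I * (κ n)⁻¹ * qh p q * ξ n) 1 1 =
        MonCyc p N q κ ξ u v n (Complex.I * (κ n)⁻¹ * qh p q * ξ n) 1 0 *
          alpha0 p N q κ u v n := by
  intro n
  have hq1 : q ^ p = 1 := hq.pow_eq_one
  have hq0 : q ≠ 0 := hq.ne_zero (NeZero.ne p)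
  have hs : qh p q ^ 2 = q := qh_sq hp hq1
  have hs0 : qh p q ≠ 0 := fun h => hq0 (by rw [← hs, h, zero_pow two_ne_zero])
  have hu0 : u n ≠ 0 := by simp [hu n]
  have hv0 : v n ≠ 0 := by simp [hv n]
  have hWeyl := isWeylPair_uopUnit_vopUnit (p := p) hq1 hq0 hu0 hv0
  obtain ⟨W, hW⟩ := isUnit_smul_vop_sq_add_one (N := N) hp hq1 (κ n) (v := v) (n := n)
    (by simpa [hv n] using hκp n)
  have hplus (i : Fin 2) : Lax p N q κ ξ u v n (I * κ n * qh p q * ξ n) i 0 =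
      Lax p N q κ ξ u v n (I * κ n * qh p q * ξ n) i 1 * uop p N u n := by
    rw [lax_eq_laxMatrix hq0 hu0 hv0, mul_div_cancel_right₀ _ (hξ n)]
    exact laxMatrix_apply_zero_eq_apply_one_mul hWeyl hs hs0 (hκ n) i
  have hminus (i : Fin 2) : Lax p N q κ ξ u v n (I * (κ n)⁻¹ * qh p q * ξ n) i 1 =
      Lax p N q κ ξ u v n (I * (κ n)⁻¹ * qh p q * ξ n) i 0 * alpha0 p N q κ u v n := by
    rw [alpha0, ← hW, ← Matrix.coe_units_inv, lax_eq_laxMatrix hq0 hu0 hv0,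
      mul_div_cancel_right₀ _ (hξ n)]
    exact laxMatrix_apply_one_eq_apply_zero_mul hWeyl hs hs0 (hκ n) W hW i
  exact ⟨⟨W, hW⟩, monCyc_apply_eq_of_lax hplus 0, monCyc_apply_eq_of_lax hplus 1,
    monCyc_apply_eq_of_lax hminus 0, monCyc_apply_eq_of_lax hminus 1⟩

/-- (Oota's reconstruction.) Assume `u_n = v_n = 1` and `κ_n^{2p} ≠ -1`.
With `μ_{n,±} = iκ_n^{±1}q^{1/2}ξ_n`, the operator `q^{-1}𝗏_n²κ_n² + 1` is invertible and
`A^{(n)}(μ_{n,+}) = B^{(n)}(μ_{n,+})·𝗎_n`, `C^{(n)}(μ_{n,+}) = D^{(n)}(μ_{n,+})·𝗎_n`,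
`B^{(n)}(μ_{n,-}) = A^{(n)}(μ_{n,-})·α_{0,n}`, `D^{(n)}(μ_{n,-}) = C^{(n)}(μ_{n,-})·α_{0,n}`. -/
theorem statement10 (p N : ℕ) [NeZero p] (hp : Odd p) (hp1 : 1 < p)
    (q : ℂ) (hq : IsPrimitiveRoot q p)
    (κ ξ u v : Fin N → ℂ) (hκ : ∀ n, κ n ≠ 0) (hξ : ∀ n, ξ n ≠ 0)
    (hu : ∀ n, u n = 1) (hv : ∀ n, v n = 1)
    (hN : 0 < N) (hκp : ∀ n, κ n ^ (2 * p) ≠ -1) :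
    ∀ n : Fin N,
      IsUnit ((q⁻¹ * κ n ^ 2) • vop p N q v n ^ 2 + (1 : Op p N)) ∧
      MonCyc p N q κ ξ u v n (Complex.I * κ n * qh p q * ξ n) 0 0 =
        MonCyc p N q κ ξ u v n (Complex.I * κ n * qh p q * ξ n) 0 1 * uop p N u n ∧
      MonCyc p N q κ ξ u v n (Complex.I * κ n * qh p q * ξ n) 1 0 =
        MonCyc p N q κ ξ u v n (Complex.I * κ n * qh p q * ξ n) 1 1 * uop p N u n ∧
      MonCyc p N q κ ξ u v n (Complex.I * (κ n)⁻¹ * qh p q * ξ n) 0 1 =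
        MonCyc p N q κ ξ u v n (Complex.I * (κ n)⁻¹ * qh p q * ξ n) 0 0 *
          alpha0 p N q κ u v n ∧
      MonCyc p N q κ ξ u v n (Complex.I * (κ n)⁻¹ * qh p q * ξ n) 1 1 =
        MonCyc p N q κ ξ u v n (Complex.I * (κ n)⁻¹ * qh p q * ξ n) 1 0 *
          alpha0 p N q κ u v n :=
  statement10_general p N hp q hq κ ξ u v hκ hξ hu hv hκp

end SG
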